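/- Let s ≥ 1, let A be a real s×s matrix, b ∈ ℝ^s, and 𝟙 = (1,…,1)ᵀ ∈ ℝ^s, and let R(z) = 1 + z bᵀ(I − zA)⁻¹𝟙 (with A, b, 𝟙 regarded as complex via coercion), which is well defined and analytic on an open neighbourhood of 0 in ℂ. Then for every m ∈ ℕ, the Taylor polynomial of R at the point 0 of degree m+1 is exactly the polynomial z ↦ 1 + (bᵀ𝟙)z + (bᵀA𝟙)z² + ⋯ + (bᵀAᵐ𝟙)z^{m+1}; that is, the stability function R_{PC,m} of the block predictor–corrector method with m correction steps is the truncated Taylor series expansion of the corrector's stability function R about the origin, truncated at degree m+1. -/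

import Mathlib

/-!
For `‖z • a‖ < 1` the Neumann series gives `(1 - z • a)⁻¹ = ∑ zⁿ aⁿ`, so applying the linear
functional `L M = bᵀ M 𝟙` shows that `R z = 1 + ∑ L (aⁿ) zⁿ⁺¹` near `0`. Hence `R` is analytic at
`0` and its Taylor coefficients `R⁽ⁿ⁾(0) / n!` are `1, L 1, L a, L a², …`, whose truncation at
degree `m + 1` is `R_{PC,m}`.
-/

open Matrix Finset Filter Topology FormalMultilinearSeries
open scoped Nat Ring

def stabilityCoeff {𝕜 𝔸 : Type*} [One 𝕜] [Monoid 𝔸] (L : 𝔸 → 𝕜) (a : 𝔸) : ℕ → 𝕜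
  | 0 => 1
  | n + 1 => L (a ^ n)

theorem HasFPowerSeriesAt.iteratedDeriv_eq_factorial_smul_coeff {𝕜 E : Type*}
    [NontriviallyNormedField 𝕜] [NormedAddCommGroup E] [NormedSpace 𝕜 E] [CompleteSpace E]
    {f : 𝕜 → E} {p : FormalMultilinearSeries 𝕜 𝕜 E} {z₀ : 𝕜} (h : HasFPowerSeriesAt f p z₀)
    (n : ℕ) : iteratedDeriv n f z₀ = n ! • p.coeff n := by
  obtain ⟨r, hr⟩ := h
  rw [iteratedDeriv_eq_iteratedFDeriv, ← hr.factorial_smul, apply_eq_pow_smul_coeff, one_pow,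
    one_smul]

section NormedAlgebra

variable {𝕜 𝔸 : Type*} [NontriviallyNormedField 𝕜] [NormedRing 𝔸] [NormedAlgebra 𝕜 𝔸]

theorem eventually_norm_smul_lt_one (a : 𝔸) : ∀ᶠ z in 𝓝 (0 : 𝕜), ‖z • a‖ < 1 :=
  (continuous_id.smul continuous_const).norm.continuousAt.eventually_lt continuousAt_const
    (by simp)

variable [HasSummableGeomSeries 𝔸]

theorem eventually_isUnit_one_sub_smul (a : 𝔸) : ∀ᶠ z in 𝓝 (0 : 𝕜), IsUnit (1 - z • a) :=
  (eventually_norm_smul_lt_one a).mono fun _ hz => isUnit_one_sub_of_norm_lt_one hz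

theorem hasSum_one_add_mul_inverse_one_sub_smul (L : 𝔸 →L[𝕜] 𝕜) {a : 𝔸} {z : 𝕜}
    (hz : ‖z • a‖ < 1) :
    HasSum (fun n => z ^ n * stabilityCoeff L a n) (1 + z * L (1 - z • a)⁻¹ʳ) := by
  have hgeom : HasSum (fun n => z ^ n * L (a ^ n)) (L (1 - z • a)⁻¹ʳ) := by
    simpa [smul_pow] using (hasSum_geom_series_inverse _ hz).mapL L
  have htail : HasSum (fun n => z ^ (n + 1) * stabilityCoeff L a (n + 1))
      (z * L (1 - z • a)⁻¹ʳ) := by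
    simp_rw [stabilityCoeff, pow_succ', mul_assoc]
    exact hgeom.mul_left z
  simpa [stabilityCoeff] using HasSum.zero_add (f := fun n => z ^ n * stabilityCoeff L a n) htail

theorem hasFPowerSeriesAt_one_add_mul_inverse_one_sub_smul (L : 𝔸 →L[𝕜] 𝕜) (a : 𝔸) :
    HasFPowerSeriesAt (fun z : 𝕜 => 1 + z * L (1 - z • a)⁻¹ʳ)
      (ofScalars 𝕜 (stabilityCoeff L a)) 0 := by
  rw [hasFPowerSeriesAt_iff]
  filter_upwards [eventually_norm_smul_lt_one a] with z hz
  simpa only [coeff_ofScalars, smul_eq_mul, zero_add] using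
    hasSum_one_add_mul_inverse_one_sub_smul L hz

end NormedAlgebra

section Matrix

-- Any algebra norm would do: the statements of this section do not mention it.
attribute [local instance] Matrix.linftyOpNormedRing Matrix.linftyOpNormedAlgebra

variable {𝕜 n : Type*} [RCLike 𝕜] [Fintype n] [DecidableEq n]

def Matrix.dotProductMulVecCLM (b v : n → 𝕜) : Matrix n n 𝕜 →L[𝕜] 𝕜 :=
  LinearMap.toContinuousLinearMap
    { toFun := fun M => b ⬝ᵥ M *ᵥ v
      map_add' := fun M N => by simp [add_mulVec, dotProduct_add]
      map_smul' := fun c M => by simp [smul_mulVec, dotProduct_smul] }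

theorem Matrix.eventually_isUnit_one_sub_smul (A : Matrix n n 𝕜) :
    ∀ᶠ z in 𝓝 (0 : 𝕜), IsUnit (1 - z • A) :=
  _root_.eventually_isUnit_one_sub_smul A

theorem Matrix.hasFPowerSeriesAt_stabilityFunction (A : Matrix n n 𝕜) (b : n → 𝕜) :
    HasFPowerSeriesAt (fun z : 𝕜 => 1 + z * (b ⬝ᵥ (1 - z • A)⁻¹ *ᵥ fun _ => 1))
      (ofScalars 𝕜 (stabilityCoeff (fun M => b ⬝ᵥ M *ᵥ fun _ => 1) A)) 0 := by
  simp only [nonsing_inv_eq_ringInverse]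
  exact hasFPowerSeriesAt_one_add_mul_inverse_one_sub_smul (dotProductMulVecCLM b fun _ => 1) A

end Matrix

theorem stmt_0_general (s : ℕ) (AC : Matrix (Fin s) (Fin s) ℂ) (bC : Fin s → ℂ)
    (R : ℂ → ℂ)
    (hR : R = fun z : ℂ => 1 + z * (bC ⬝ᵥ ((1 : Matrix (Fin s) (Fin s) ℂ) - z • AC)⁻¹ *ᵥ (fun _ => 1))) :
    (∀ᶠ z in nhds (0 : ℂ), IsUnit ((1 : Matrix (Fin s) (Fin s) ℂ) - z • AC)) ∧
    AnalyticAt ℂ R 0 ∧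
    ∀ m : ℕ, ∀ z : ℂ,
      (∑ n ∈ Finset.range (m + 2), (iteratedDeriv n R 0 / n.factorial) * z ^ n)
        = 1 + ∑ n ∈ Finset.range (m + 1),
            (bC ⬝ᵥ (AC ^ n) *ᵥ (fun _ => 1)) * z ^ (n + 1) := by
  have hseries := hR ▸ AC.hasFPowerSeriesAt_stabilityFunction bC
  refine ⟨AC.eventually_isUnit_one_sub_smul, hseries.analyticAt, fun m z => ?_⟩
  have htaylor (n : ℕ) :
      iteratedDeriv n R 0 / n ! = stabilityCoeff (fun M => bC ⬝ᵥ M *ᵥ fun _ => 1) AC n := by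
    rw [hseries.iteratedDeriv_eq_factorial_smul_coeff, coeff_ofScalars, nsmul_eq_mul,
      mul_div_cancel_left₀ _ (Nat.cast_ne_zero.2 n.factorial_ne_zero)]
  simp only [htaylor]
  rw [sum_range_succ', add_comm]
  simp [stabilityCoeff]

/-- Let `s ≥ 1`, `A` a real `s × s` matrix, `b ∈ ℝ^s`, `𝟙 = (1,…,1)ᵀ`, and
`R z = 1 + z bᵀ (I − z A)⁻¹ 𝟙` (with everything regarded as complex), which is
well defined and analytic on an open neighbourhood of `0` in `ℂ`.  Then for every
`m ∈ ℕ` the Taylor polynomial of `R` at `0` of degree `m + 1` is exactly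
`z ↦ 1 + (bᵀ𝟙) z + (bᵀA𝟙) z² + ⋯ + (bᵀAᵐ𝟙) z^(m+1)`, the stability function of
the block predictor–corrector method with `m` correction steps. -/
theorem stmt_0 (s : ℕ) (hs : 1 ≤ s) (A : Matrix (Fin s) (Fin s) ℝ) (b : Fin s → ℝ)
    (AC : Matrix (Fin s) (Fin s) ℂ) (hAC : AC = A.map (Complex.ofReal))
    (bC : Fin s → ℂ) (hbC : bC = fun i => (b i : ℂ))
    (R : ℂ → ℂ)
    (hR : R = fun z : ℂ => 1 + z * (bC ⬝ᵥ ((1 : Matrix (Fin s) (Fin s) ℂ) - z • AC)⁻¹ *ᵥ (fun _ => 1))) :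
    (∀ᶠ z in nhds (0 : ℂ), IsUnit ((1 : Matrix (Fin s) (Fin s) ℂ) - z • AC)) ∧
    AnalyticAt ℂ R 0 ∧
    ∀ m : ℕ, ∀ z : ℂ,
      (∑ n ∈ Finset.range (m + 2), (iteratedDeriv n R 0 / n.factorial) * z ^ n)
        = 1 + ∑ n ∈ Finset.range (m + 1),
            (bC ⬝ᵥ (AC ^ n) *ᵥ (fun _ => 1)) * z ^ (n + 1) :=
  stmt_0_general s AC bC R hR
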